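/- Smoothing preserves convexity and yields a Lipschitz gradient: let U be a compact convex subset of R^n, d: U -> R continuous and sigma-strongly convex with sigma > 0, and for mu > 0 define h_mu(x) = max_{u in U} ( <A x, u> - mu d(u) ) for a linear map A. Then h_mu is convex and differentiable with gradient A^T u*(x), where u*(x) is the unique maximizer, and the gradient is Lipschitz continuous with constant ||A||^2/(mu sigma). -/
import Mathlib

open RealInnerProductSpace Topology Filter Asymptotics

set_option maxHeartbeats 1000000 in
/-- Nesterov's smoothing theorem: for a compact convex set `U`, a continuous `σ`-strongly
convex prox-function `d`, and `μ > 0`, the smoothed function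
`h_μ(x) = max_{u ∈ U} (⟨A x, u⟩ - μ d(u))` is convex and differentiable with gradient
`Aᵀ u*(x)` (`u*(x)` the unique maximizer), and this gradient is Lipschitz continuous
with constant `‖A‖² / (μ σ)`. -/
theorem stmt7 (n m : ℕ)
    (U : Set (EuclideanSpace ℝ (Fin n)))
    (hUne : U.Nonempty) (hUcomp : IsCompact U) (hUconv : Convex ℝ U)
    (d : EuclideanSpace ℝ (Fin n) → ℝ) (hd : ContinuousOn d U)
    (σ : ℝ) (hσ : 0 < σ) (hsc : StrongConvexOn U σ d)
    (μ : ℝ) (hμ : 0 < μ)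
    (A : EuclideanSpace ℝ (Fin m) →L[ℝ] EuclideanSpace ℝ (Fin n))
    (hμfun : EuclideanSpace ℝ (Fin m) → ℝ)
    (hdef : ∀ x, IsGreatest {v : ℝ | ∃ u ∈ U, v = ⟪A x, u⟫ - μ * d u} (hμfun x)) :
    ConvexOn ℝ Set.univ hμfun ∧
    ∃ uStar : EuclideanSpace ℝ (Fin m) → EuclideanSpace ℝ (Fin n),
      (∀ x, uStar x ∈ U ∧
        (∀ u ∈ U, ⟪A x, u⟫ - μ * d u ≤ ⟪A x, uStar x⟫ - μ * d (uStar x)) ∧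
        (∀ u ∈ U, ⟪A x, u⟫ - μ * d u = ⟪A x, uStar x⟫ - μ * d (uStar x) → u = uStar x)) ∧
      (∀ x, HasGradientAt hμfun ((ContinuousLinearMap.adjoint A) (uStar x)) x) ∧
      LipschitzWith (Real.toNNReal (‖A‖ ^ 2 / (μ * σ)))
        (fun x => (ContinuousLinearMap.adjoint A) (uStar x)) := by
  choose uS huU huEq using fun x => (hdef x).1
  have hub : ∀ x, ∀ u ∈ U, ⟪A x, u⟫ - μ * d u ≤ hμfun x := by
    intro x u hu; exact (hdef x).2 ⟨u, hu, rfl⟩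
  -- the key strong-concavity inequality at the maximizer
  have key : ∀ x, ∀ v ∈ U, (⟪A x, v⟫ - μ * d v) + μ * σ / 2 * ‖uS x - v‖ ^ 2
      ≤ ⟪A x, uS x⟫ - μ * d (uS x) := by
    intro x v hv
    have hstep : ∀ t ∈ Set.Ioo (0:ℝ) 1,
        (⟪A x, v⟫ - μ * d v) + μ * σ / 2 * (1 - t) * ‖uS x - v‖ ^ 2
          ≤ ⟪A x, uS x⟫ - μ * d (uS x) := by
      intro t ht
      have h1t : (0:ℝ) ≤ 1 - t := by linarith [ht.2]
      have hw : (1 - t) • uS x + t • v ∈ U := hUconv (huU x) hv h1t ht.1.le (by ring)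
      have hd2 := hsc.2 (huU x) hv h1t ht.1.le (by ring)
      have hmax := hub x _ hw
      rw [huEq x] at hmax
      have hinner : ⟪A x, (1 - t) • uS x + t • v⟫
          = (1 - t) * ⟪A x, uS x⟫ + t * ⟪A x, v⟫ := by
        rw [inner_add_right, real_inner_smul_right, real_inner_smul_right]
      have hd3 : μ * d ((1 - t) • uS x + t • v)
          ≤ μ * ((1 - t) * d (uS x) + t * d v - (1 - t) * t * (σ / 2 * ‖uS x - v‖ ^ 2)) :=
        mul_le_mul_of_nonneg_left hd2 hμ.le
      have h4 : t * ((⟪A x, v⟫ - μ * d v) + μ * σ / 2 * (1 - t) * ‖uS x - v‖ ^ 2)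
          ≤ t * (⟪A x, uS x⟫ - μ * d (uS x)) := by nlinarith [hmax, hd3, hinner]
      exact le_of_mul_le_mul_left h4 ht.1
    have htend : Filter.Tendsto
        (fun t : ℝ => (⟪A x, v⟫ - μ * d v) + μ * σ / 2 * (1 - t) * ‖uS x - v‖ ^ 2)
        (nhdsWithin 0 (Set.Ioi 0))
        (𝓝 ((⟪A x, v⟫ - μ * d v) + μ * σ / 2 * (1 - 0) * ‖uS x - v‖ ^ 2)) :=
      Filter.Tendsto.mono_left (Continuous.tendsto (by continuity) 0) nhdsWithin_le_nhds
    have hev : ∀ᶠ t in nhdsWithin (0:ℝ) (Set.Ioi 0),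
        (⟪A x, v⟫ - μ * d v) + μ * σ / 2 * (1 - t) * ‖uS x - v‖ ^ 2
          ≤ ⟪A x, uS x⟫ - μ * d (uS x) :=
      Filter.eventually_of_mem (Ioo_mem_nhdsGT_of_mem ⟨le_refl 0, one_pos⟩) hstep
    have := le_of_tendsto htend hev
    linarith [this]
  have hμσ : 0 < μ * σ := mul_pos hμ hσ
  -- Lipschitz continuity of the maximizer
  have hlip : ∀ x y, μ * σ * ‖uS x - uS y‖ ≤ ‖A‖ * ‖x - y‖ := by
    intro x y
    have k1 := key x (uS y) (huU y)
    have k2 := key y (uS x) (huU x)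
    have hsym : ‖uS y - uS x‖ = ‖uS x - uS y‖ := norm_sub_rev _ _
    rw [hsym] at k2
    have hsum : μ * σ * ‖uS x - uS y‖ ^ 2
        ≤ ⟪A x, uS x⟫ - ⟪A x, uS y⟫ - ⟪A y, uS x⟫ + ⟪A y, uS y⟫ := by linarith
    have hre : ⟪A x, uS x⟫ - ⟪A x, uS y⟫ - ⟪A y, uS x⟫ + ⟪A y, uS y⟫
        = ⟪A (x - y), uS x - uS y⟫ := by
      rw [map_sub, inner_sub_left, inner_sub_right, inner_sub_right]; ring
    rw [hre] at hsum
    have hcs : ⟪A (x - y), uS x - uS y⟫ ≤ ‖A‖ * ‖x - y‖ * ‖uS x - uS y‖ := by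
      calc ⟪A (x - y), uS x - uS y⟫ ≤ ‖A (x - y)‖ * ‖uS x - uS y‖ :=
            real_inner_le_norm _ _
        _ ≤ ‖A‖ * ‖x - y‖ * ‖uS x - uS y‖ :=
            mul_le_mul_of_nonneg_right (A.le_opNorm _) (norm_nonneg _)
    rcases eq_or_lt_of_le (norm_nonneg (uS x - uS y)) with h0 | h0
    · rw [← h0, mul_zero]; exact mul_nonneg (norm_nonneg _) (norm_nonneg _)
    · have h5 : μ * σ * ‖uS x - uS y‖ * ‖uS x - uS y‖ ≤ ‖A‖ * ‖x - y‖ * ‖uS x - uS y‖ := by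
        calc μ * σ * ‖uS x - uS y‖ * ‖uS x - uS y‖ = μ * σ * ‖uS x - uS y‖ ^ 2 := by ring
          _ ≤ ‖A‖ * ‖x - y‖ * ‖uS x - uS y‖ := hsum.trans hcs
      exact le_of_mul_le_mul_right h5 h0
  -- subgradient inequality
  have hsub : ∀ x y, hμfun x + ⟪(ContinuousLinearMap.adjoint A) (uS x), y - x⟫ ≤ hμfun y := by
    intro x y
    have h1 := hub y (uS x) (huU x)
    have h2 : ⟪(ContinuousLinearMap.adjoint A) (uS x), y - x⟫ = ⟪A (y - x), uS x⟫ := by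
      rw [ContinuousLinearMap.adjoint_inner_left]; exact real_inner_comm _ _
    rw [huEq x, h2, map_sub, inner_sub_left]
    linarith
  refine ⟨?_, uS, ?_, ?_, ?_⟩
  · -- convexity
    refine ⟨convex_univ, ?_⟩
    intro x _ y _ a b ha hb hab
    have hm := huEq (a • x + b • y)
    have hin : ⟪A (a • x + b • y), uS (a • x + b • y)⟫
        = a * ⟪A x, uS (a • x + b • y)⟫ + b * ⟪A y, uS (a • x + b • y)⟫ := by
      rw [map_add, map_smul, map_smul, inner_add_left, real_inner_smul_left,
        real_inner_smul_left]
    have h1 := hub x (uS (a • x + b • y)) (huU _)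
    have h2 := hub y (uS (a • x + b • y)) (huU _)
    have ha1 := mul_le_mul_of_nonneg_left h1 ha
    have ha2 := mul_le_mul_of_nonneg_left h2 hb
    have hd1 : μ * d (uS (a • x + b • y))
        = a * (μ * d (uS (a • x + b • y))) + b * (μ * d (uS (a • x + b • y))) := by
      rw [← add_mul, hab, one_mul]
    simp only [smul_eq_mul]
    linarith [ha1, ha2, hm, hin, hd1]
  · -- maximizer properties
    intro x
    refine ⟨huU x, ?_, ?_⟩
    · intro u hu
      rw [← huEq x]; exact hub x u hu
    · intro u hu heq
      have k := key x u hu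
      rw [heq] at k
      have : ‖uS x - u‖ ^ 2 ≤ 0 := by nlinarith
      have : ‖uS x - u‖ = 0 := by nlinarith [sq_nonneg ‖uS x - u‖, norm_nonneg (uS x - u)]
      have := norm_sub_eq_zero_iff.mp this
      exact this.symm
  · -- differentiability
    intro x
    rw [hasGradientAt_iff_isLittleO]
    have hbound : ∀ y, ‖hμfun y - hμfun x - ⟪(ContinuousLinearMap.adjoint A) (uS x), y - x⟫‖
        ≤ (‖A‖ ^ 2 / (μ * σ)) * ‖y - x‖ ^ 2 := by
      intro y
      have hlo := hsub x y
      have hhi : hμfun y - hμfun x ≤ ⟪A (y - x), uS y⟫ := by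
        have h1 := hub x (uS y) (huU y)
        rw [huEq x] at h1
        rw [huEq y, huEq x]
        have : ⟪A (y - x), uS y⟫ = ⟪A y, uS y⟫ - ⟪A x, uS y⟫ := by
          rw [map_sub, inner_sub_left]
        linarith
      have hadj : ⟪(ContinuousLinearMap.adjoint A) (uS x), y - x⟫ = ⟪A (y - x), uS x⟫ := by
        rw [ContinuousLinearMap.adjoint_inner_left]; exact real_inner_comm _ _
      have hdiff : ⟪A (y - x), uS y⟫ - ⟪A (y - x), uS x⟫ = ⟪A (y - x), uS y - uS x⟫ := by
        rw [inner_sub_right]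
      have hcs : ⟪A (y - x), uS y - uS x⟫ ≤ ‖A‖ * ‖y - x‖ * ‖uS y - uS x‖ := by
        calc ⟪A (y - x), uS y - uS x⟫ ≤ ‖A (y - x)‖ * ‖uS y - uS x‖ := real_inner_le_norm _ _
          _ ≤ ‖A‖ * ‖y - x‖ * ‖uS y - uS x‖ :=
              mul_le_mul_of_nonneg_right (A.le_opNorm _) (norm_nonneg _)
      have hl := hlip y x
      have hnn : ‖uS y - uS x‖ ≤ ‖A‖ / (μ * σ) * ‖y - x‖ := by
        rw [div_mul_eq_mul_div, le_div_iff₀ hμσ]; linarith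
      have hub2 : hμfun y - hμfun x - ⟪(ContinuousLinearMap.adjoint A) (uS x), y - x⟫
          ≤ (‖A‖ ^ 2 / (μ * σ)) * ‖y - x‖ ^ 2 := by
        rw [hadj]
        have : ⟪A (y - x), uS y⟫ - ⟪A (y - x), uS x⟫
            ≤ ‖A‖ * ‖y - x‖ * (‖A‖ / (μ * σ) * ‖y - x‖) := by
          rw [hdiff]
          calc ⟪A (y - x), uS y - uS x⟫ ≤ ‖A‖ * ‖y - x‖ * ‖uS y - uS x‖ := hcs
            _ ≤ ‖A‖ * ‖y - x‖ * (‖A‖ / (μ * σ) * ‖y - x‖) :=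
                mul_le_mul_of_nonneg_left hnn (by positivity)
        calc hμfun y - hμfun x - ⟪A (y - x), uS x⟫
            ≤ ⟪A (y - x), uS y⟫ - ⟪A (y - x), uS x⟫ := by linarith
          _ ≤ ‖A‖ * ‖y - x‖ * (‖A‖ / (μ * σ) * ‖y - x‖) := this
          _ = (‖A‖ ^ 2 / (μ * σ)) * ‖y - x‖ ^ 2 := by ring
      rw [Real.norm_eq_abs, abs_le]
      constructor
      · have : (0:ℝ) ≤ (‖A‖ ^ 2 / (μ * σ)) * ‖y - x‖ ^ 2 := by positivity
        linarith
      · exact hub2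
    have hO : (fun y => hμfun y - hμfun x - ⟪(ContinuousLinearMap.adjoint A) (uS x), y - x⟫)
        =O[nhds x] (fun y => ‖y - x‖ ^ 2) := by
      apply Asymptotics.IsBigO.of_bound (‖A‖ ^ 2 / (μ * σ))
      filter_upwards with y
      simpa [abs_of_nonneg (sq_nonneg ‖y - x‖)] using hbound y
    refine hO.trans_isLittleO ?_
    rw [Asymptotics.isLittleO_iff]
    intro c hc
    filter_upwards [Metric.ball_mem_nhds x hc] with y hy
    have hlt : ‖y - x‖ < c := by rwa [Metric.mem_ball, dist_eq_norm] at hy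
    rw [Real.norm_eq_abs, abs_of_nonneg (sq_nonneg _), sq]
    exact mul_le_mul_of_nonneg_right hlt.le (norm_nonneg _)
  · -- Lipschitz gradient
    apply LipschitzWith.of_dist_le_mul
    intro x y
    rw [dist_eq_norm, dist_eq_norm]
    have h1 : ‖(ContinuousLinearMap.adjoint A) (uS x) - (ContinuousLinearMap.adjoint A) (uS y)‖
        ≤ ‖A‖ * ‖uS x - uS y‖ := by
      rw [← map_sub]
      calc ‖(ContinuousLinearMap.adjoint A) (uS x - uS y)‖
          ≤ ‖ContinuousLinearMap.adjoint A‖ * ‖uS x - uS y‖ :=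
            ContinuousLinearMap.le_opNorm (ContinuousLinearMap.adjoint A) _
        _ = ‖A‖ * ‖uS x - uS y‖ := by rw [ContinuousLinearMap.adjoint.norm_map A]
    have h2 := hlip x y
    have hco : ((Real.toNNReal (‖A‖ ^ 2 / (μ * σ)) : NNReal) : ℝ) = ‖A‖ ^ 2 / (μ * σ) :=
      Real.coe_toNNReal _ (by positivity)
    rw [hco]
    have h3 : ‖A‖ * ‖uS x - uS y‖ ≤ ‖A‖ ^ 2 / (μ * σ) * ‖x - y‖ := by
      rcases le_or_gt ‖A‖ 0 with hA | hA
      · have hA0 : ‖A‖ = 0 := le_antisymm hA (norm_nonneg _)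
        simp [hA0]
      · rw [div_mul_eq_mul_div, le_div_iff₀ hμσ]
        nlinarith [norm_nonneg (uS x - uS y)]
    linarith
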